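/- arXiv:2111.03969 — 6 statements merged into one kernel-verified Lean document; each statement's English description precedes it below -/
import Mathlib

section
/- Let m be a positive integer, V a finite nonempty type, and A : V → V → ℕ an arrow-count matrix of a quiver such that for every i ∈ V one has ∑_j A i j ≤ m and ∑_j A j i ≤ m (the quiver is sub-m-regular), and such that the reflexive–transitive closure of the symmetric relation 'A i j + A j i > 0' relates any two elements of V (the quiver is connected). Then there exists A' : V → V → ℕ with A i j ≤ A' i j for all i, j ∈ V, with ∑_j A' i j = m and ∑_j A' j i = m for every i ∈ V, and such that the reflexive–transitive closure of the symmetric relation 'A' i j + A' j i > 0' still relates any two elements of V. (Any finite, connected sub-m-regular quiver may be augmented to a connected m-regular quiver by adding only arrows.) -/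
/-- Transportation lemma: given integer margins with equal total, there is a
nonnegative integer matrix with those row and column sums. -/
lemma exists_matrix_with_margins {V : Type*} [Fintype V] :
    ∀ (n : ℕ) (d e : V → ℕ), (∑ i, d i) = n → (∑ i, e i) = n →
    ∃ B : V → V → ℕ, (∀ i, (∑ j, B i j) = d i) ∧ (∀ j, (∑ i, B i j) = e j) := by
  classical
  intro n
  induction n with
  | zero =>
    intro d e hd he
    have hd' : ∀ i, d i = 0 := by
      intro i
      have := Finset.sum_eq_zero_iff.mp hd
      exact this i (Finset.mem_univ i)
    have he' : ∀ i, e i = 0 := by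
      intro i
      have := Finset.sum_eq_zero_iff.mp he
      exact this i (Finset.mem_univ i)
    exact ⟨fun _ _ => 0, fun i => by simp [hd' i], fun j => by simp [he' j]⟩
  | succ n ih =>
    intro d e hd he
    obtain ⟨i0, hi0⟩ : ∃ i, 0 < d i := by
      by_contra h
      push_neg at h
      simp only [Nat.le_zero] at h
      simp [h] at hd
    obtain ⟨j0, hj0⟩ : ∃ j, 0 < e j := by
      by_contra h
      push_neg at h
      simp only [Nat.le_zero] at h
      simp [h] at he
    set d' : V → ℕ := Function.update d i0 (d i0 - 1) with hd'def
    set e' : V → ℕ := Function.update e j0 (e j0 - 1) with he'def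
    have hsum_d' : (∑ i, d' i) = n := by
      have : (∑ i, d' i) + 1 = (∑ i, d i) := by
        rw [hd'def, Finset.sum_update_of_mem (Finset.mem_univ i0),
          ← Finset.sum_compl_add_sum ({i0} : Finset V) d, Finset.sum_singleton,
          Finset.compl_eq_univ_sdiff]
        omega
      omega
    have hsum_e' : (∑ i, e' i) = n := by
      have : (∑ i, e' i) + 1 = (∑ i, e i) := by
        rw [he'def, Finset.sum_update_of_mem (Finset.mem_univ j0),
          ← Finset.sum_compl_add_sum ({j0} : Finset V) e, Finset.sum_singleton,
          Finset.compl_eq_univ_sdiff]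
        omega
      omega
    obtain ⟨B', hrow, hcol⟩ := ih d' e' hsum_d' hsum_e'
    refine ⟨fun i j => B' i j + (if i = i0 ∧ j = j0 then 1 else 0), ?_, ?_⟩
    · intro i
      rw [Finset.sum_add_distrib, hrow]
      by_cases h : i = i0
      · subst h
        simp [hd'def, Function.update]
        omega
      · simp [hd'def, Function.update, h]
    · intro j
      rw [Finset.sum_add_distrib, hcol]
      by_cases h : j = j0
      · subst h
        simp [he'def, Function.update]
        omega
      · simp [he'def, Function.update, h]

/-- **Augmenting a sub-regular quiver to a regular one.**
A finite connected quiver, encoded by its arrow-count matrix `A`, that is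
sub-`m`-regular may be augmented (adding arrows only) to a connected
`m`-regular quiver `A'`. -/
theorem augment_sub_regular_to_regular {V : Type*} [Fintype V] [Nonempty V]
    (m : ℕ) (hm : 0 < m) (A : V → V → ℕ)
    (hout : ∀ i : V, (∑ j : V, A i j) ≤ m)
    (hin : ∀ i : V, (∑ j : V, A j i) ≤ m)
    (hconn : ∀ i j : V, Relation.ReflTransGen (fun a b => 0 < A a b + A b a) i j) :
    ∃ A' : V → V → ℕ,
      (∀ i j : V, A i j ≤ A' i j) ∧
      (∀ i : V, (∑ j : V, A' i j) = m) ∧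
      (∀ i : V, (∑ j : V, A' j i) = m) ∧
      (∀ i j : V, Relation.ReflTransGen (fun a b => 0 < A' a b + A' b a) i j) := by
  set d : V → ℕ := fun i => m - ∑ j, A i j with hddef
  set e : V → ℕ := fun i => m - ∑ j, A j i with hedef
  have htot : (∑ i : V, ∑ j : V, A i j) = ∑ j : V, ∑ i : V, A i j :=
    Finset.sum_comm
  have hsum : (∑ i, d i) = (∑ i, e i) := by
    have h1 : (∑ i, d i) + (∑ i : V, ∑ j : V, A i j) = Fintype.card V * m := by
      rw [← Finset.sum_add_distrib]
      rw [Finset.sum_congr rfl (fun i _ => Nat.sub_add_cancel (hout i))]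
      simp [Finset.card_univ, mul_comm]
    have h2 : (∑ i, e i) + (∑ i : V, ∑ j : V, A j i) = Fintype.card V * m := by
      rw [← Finset.sum_add_distrib]
      rw [Finset.sum_congr rfl (fun i _ => Nat.sub_add_cancel (hin i))]
      simp [Finset.card_univ, mul_comm]
    omega
  obtain ⟨B, hrow, hcol⟩ := exists_matrix_with_margins (∑ i, d i) d e rfl hsum.symm
  refine ⟨fun i j => A i j + B i j, fun i j => Nat.le_add_right _ _, ?_, ?_, ?_⟩
  · intro i
    rw [Finset.sum_add_distrib, hrow]
    exact Nat.add_sub_cancel' (hout i)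
  · intro i
    rw [Finset.sum_add_distrib, hcol]
    exact Nat.add_sub_cancel' (hin i)
  · intro i j
    refine Relation.ReflTransGen.mono ?_ i j (hconn i j)
    intro a b hab
    dsimp only
    omega
end

section
/- There exists a bijection π : V → V such that a_{π(i)} = c_i for every i ∈ V; that is, the source integer sequence and the target integer sequence of a nonzero-path ideal take the same multiset of values. -/
/-- `p` is a subpath of `q` in the 1-regular quiver determined by the
bijection `τ`: paths are pairs `(source, length)`. -/
def IsSubpath {V : Type*} (τ : Equiv.Perm V) (p q : V × ℕ) : Prop :=
  ∃ k : ℕ, k + p.2 ≤ q.2 ∧ p.1 = (τ ^ k) q.1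

/-- The source integer sequence `a` and the target integer sequence `c` of a
nonzero-path ideal take the same multiset of values: there is a permutation
`π` of the vertices with `a (π i) = c i` for all `i`. -/
theorem source_seq_perm_of_target_seq {V : Type*} [Fintype V] [Nonempty V]
    (τ : Equiv.Perm V)
    (N : Set (V × ℕ))
    (hN0 : ∀ i : V, (i, 0) ∈ N)
    (hNdown : ∀ p q : V × ℕ, IsSubpath τ p q → q ∈ N → p ∈ N)
    (hNfin : ∀ i : V, {ℓ : ℕ | (i, ℓ) ∈ N}.Finite)
    (a c : V → ℕ)
    (ha : ∀ i : V, (i, a i) ∈ N ∧ ∀ ℓ : ℕ, (i, ℓ) ∈ N → ℓ ≤ a i)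
    (hc : ∀ i : V, ((τ⁻¹ ^ c i) i, c i) ∈ N ∧ ∀ ℓ : ℕ, ((τ⁻¹ ^ ℓ) i, ℓ) ∈ N → ℓ ≤ c i) :
    ∃ π : Equiv.Perm V, ∀ i : V, a (π i) = c i := by
  classical
  have hA : ∀ (i : V) (ℓ : ℕ), ℓ ≤ a i ↔ (i, ℓ) ∈ N := by
    intro i ℓ
    constructor
    · intro h
      exact hNdown (i, ℓ) (i, a i) ⟨0, by simpa using h, by simp⟩ (ha i).1
    · intro h; exact (ha i).2 ℓ h
  have hC : ∀ (j : V) (ℓ : ℕ), ℓ ≤ c j ↔ ((τ⁻¹ ^ ℓ) j, ℓ) ∈ N := by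
    intro j ℓ
    constructor
    · intro h
      refine hNdown _ ((τ⁻¹ ^ c j) j, c j) ⟨c j - ℓ, by simp; omega, ?_⟩ (hc j).1
      show (τ⁻¹ ^ ℓ) j = (τ ^ (c j - ℓ)) ((τ⁻¹ ^ c j) j)
      have hg : τ ^ (c j - ℓ) * τ⁻¹ ^ (c j) = τ⁻¹ ^ ℓ := by
        have h1 : τ ^ ℓ * τ ^ (c j - ℓ) = τ ^ (c j) := by
          rw [← pow_add]; congr 1; omega
        rw [inv_pow, inv_pow, ← h1]; group
      rw [← hg]; rfl
    · intro h; exact (hc j).2 ℓ h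
  -- equal cardinality of superlevel sets
  have hcard : ∀ ℓ : ℕ,
      (Finset.univ.filter fun i : V => ℓ ≤ a i).card =
      (Finset.univ.filter fun j : V => ℓ ≤ c j).card := by
    intro ℓ
    apply Finset.card_bij' (fun i _ => (τ ^ ℓ) i) (fun j _ => (τ⁻¹ ^ ℓ) j)
    · intro i hi
      simp only [Finset.mem_filter, Finset.mem_univ, true_and] at hi ⊢
      rw [hC]
      have : (τ⁻¹ ^ ℓ) ((τ ^ ℓ) i) = i := by
        rw [inv_pow]; exact Equiv.symm_apply_apply (τ ^ ℓ) i
      rw [this]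
      exact (hA i ℓ).1 hi
    · intro j hj
      simp only [Finset.mem_filter, Finset.mem_univ, true_and] at hj ⊢
      rw [hA]
      exact (hC j ℓ).1 hj
    · intro i _
      rw [inv_pow]; exact Equiv.symm_apply_apply (τ ^ ℓ) i
    · intro j _
      rw [inv_pow]; exact Equiv.apply_symm_apply (τ ^ ℓ) j
  -- equal cardinality of fibers
  have hfib : ∀ n : ℕ, Fintype.card (a ⁻¹' {n}) = Fintype.card (c ⁻¹' {n}) := by
    intro n
    have ea : ∀ f : V → ℕ,
        (Finset.univ.filter fun i : V => n ≤ f i).card =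
        (Finset.univ.filter fun i : V => f i = n).card +
        (Finset.univ.filter fun i : V => n + 1 ≤ f i).card := by
      intro f
      rw [← Finset.card_union_of_disjoint]
      · congr 1; ext i
        simp only [Finset.mem_filter, Finset.mem_univ, true_and, Finset.mem_union]
        omega
      · rw [Finset.disjoint_left]
        intro i hi hi'
        simp only [Finset.mem_filter, Finset.mem_univ, true_and] at hi hi'
        omega
    have h1 := hcard n
    have h2 := hcard (n + 1)
    have e1 := ea a
    have e2 := ea c
    have hca : Fintype.card (a ⁻¹' {n}) =
        (Finset.univ.filter fun i : V => a i = n).card := by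
      rw [Fintype.card_subtype]; congr 1; ext i; simp
    have hcc : Fintype.card (c ⁻¹' {n}) =
        (Finset.univ.filter fun i : V => c i = n).card := by
      rw [Fintype.card_subtype]; congr 1; ext i; simp
    omega
  let e : ∀ n : ℕ, (c ⁻¹' {n}) ≃ (a ⁻¹' {n}) :=
    fun n => Fintype.equivOfCardEq (hfib n).symm
  refine ⟨(Equiv.sigmaFiberEquiv c).symm.trans
    ((Equiv.sigmaCongrRight e).trans (Equiv.sigmaFiberEquiv a)), fun i => ?_⟩
  show a ((Equiv.sigmaFiberEquiv a) ((Equiv.sigmaCongrRight e) ((Equiv.sigmaFiberEquiv c).symm i))) = c i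
  have h1 : (Equiv.sigmaFiberEquiv c).symm i = ⟨c i, ⟨i, rfl⟩⟩ := rfl
  rw [h1]
  exact (e (c i) ⟨i, rfl⟩).2
end

section
/- There exists a bijection π : V → V such that a_{π(i)} + b_{π(i)} = c_i + d_i for every i ∈ V; that is, the sequences (a_i + b_i) and (c_i + d_i) arising from a nonzero-path ideal and a component set take the same multiset of values. -/
/-- The sequences `(a i + b i)` and `(c i + d i)` arising from a nonzero-path
ideal and a component set take the same multiset of values: there is a
permutation `π` of the vertices with `a (π i) + b (π i) = c i + d i`. -/
theorem sum_seq_perm_of_target_sum_seq {V : Type*} [Fintype V] [Nonempty V]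
    (τ : Equiv.Perm V)
    (N : Set (V × ℕ))
    (hN0 : ∀ i : V, (i, 0) ∈ N)
    (hNdown : ∀ p q : V × ℕ, IsSubpath τ p q → q ∈ N → p ∈ N)
    (hNfin : ∀ i : V, {ℓ : ℕ | (i, ℓ) ∈ N}.Finite)
    (a c : V → ℕ)
    (ha : ∀ i : V, (i, a i) ∈ N ∧ ∀ ℓ : ℕ, (i, ℓ) ∈ N → ℓ ≤ a i)
    (hc : ∀ i : V, ((τ⁻¹ ^ c i) i, c i) ∈ N ∧ ∀ ℓ : ℕ, ((τ⁻¹ ^ ℓ) i, ℓ) ∈ N → ℓ ≤ c i)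
    (C : Set (V × ℕ)) (hCN : C ⊆ N)
    (hCanti : ∀ p ∈ C, ∀ q ∈ C, IsSubpath τ p q → p = q)
    (hCmax : ∀ p ∈ C, ∀ q ∈ N, IsSubpath τ p q → p = q)
    (hClen : ∀ p ∈ C, 2 ≤ p.2)
    (b d : V → ℕ)
    (hb : ∀ i : V, (b i = 0 ∧ ∃ ℓ : ℕ, (i, ℓ) ∈ C) ∨ (b i = 1 ∧ ¬ ∃ ℓ : ℕ, (i, ℓ) ∈ C))
    (hd : ∀ i : V, (d i = 0 ∧ ∃ p ∈ C, (τ ^ p.2) p.1 = i) ∨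
      (d i = 1 ∧ ¬ ∃ p ∈ C, (τ ^ p.2) p.1 = i)) :
    ∃ π : Equiv.Perm V, ∀ i : V, a (π i) + b (π i) = c i + d i := by
  classical
  -- power juggling helpers
  have hpow1 : ∀ (k m : ℕ) (x : V), (τ ^ k) ((τ⁻¹ ^ (k + m)) x) = (τ⁻¹ ^ m) x := by
    intro k m x
    simp [pow_add, inv_pow, Equiv.Perm.mul_apply]
  have hpow2 : ∀ (n : ℕ) (x : V), (τ⁻¹ ^ n) ((τ ^ n) x) = x := by
    intro n x; simp [inv_pow]
  have hpow3 : ∀ (n : ℕ) (x : V), (τ ^ n) ((τ⁻¹ ^ n) x) = x := by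
    intro n x; simp [inv_pow]
  -- membership characterizations
  have hA : ∀ (i : V) (n : ℕ), (i, n) ∈ N ↔ n ≤ a i := by
    intro i n
    constructor
    · exact (ha i).2 n
    · intro hn
      exact hNdown (i, n) (i, a i) ⟨0, by simpa using hn, by simp⟩ (ha i).1
  have hC : ∀ (j : V) (n : ℕ), ((τ⁻¹ ^ n) j, n) ∈ N ↔ n ≤ c j := by
    intro j n
    constructor
    · exact (hc j).2 n
    · intro hn
      refine hNdown _ ((τ⁻¹ ^ c j) j, c j) ⟨c j - n, ?_, ?_⟩ (hc j).1
      · exact (Nat.sub_add_cancel hn).le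
      · have := hpow1 (c j - n) n j
        rw [Nat.sub_add_cancel hn] at this
        exact this.symm
  -- facts about component paths
  have hcomp : ∀ p ∈ C, a p.1 = p.2 ∧ b p.1 = 0 ∧
      c ((τ ^ p.2) p.1) = p.2 ∧ d ((τ ^ p.2) p.1) = 0 := by
    intro p hp
    have hpN : p ∈ N := hCN hp
    have hpe : (p.1, p.2) = p := rfl
    have hap : a p.1 = p.2 := by
      have h1 : p.2 ≤ a p.1 := (ha p.1).2 p.2 (hpe ▸ hpN)
      have h2 : p = (p.1, a p.1) :=
        hCmax p hp (p.1, a p.1) (ha p.1).1 ⟨0, by simpa using h1, by simp⟩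
      exact (congrArg Prod.snd h2).symm
    have hbp : b p.1 = 0 := by
      rcases hb p.1 with h | h
      · exact h.1
      · exact absurd ⟨p.2, hpe ▸ hp⟩ h.2
    set j := (τ ^ p.2) p.1 with hj
    have hinv : (τ⁻¹ ^ p.2) j = p.1 := hpow2 p.2 p.1
    have hcj : c j = p.2 := by
      have h1 : p.2 ≤ c j := (hc j).2 p.2 (by rw [hinv]; exact hpe ▸ hpN)
      have h2 : p = ((τ⁻¹ ^ c j) j, c j) := by
        refine hCmax p hp _ (hc j).1 ⟨c j - p.2, ?_, ?_⟩
        · exact (Nat.sub_add_cancel h1).le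
        · have := hpow1 (c j - p.2) p.2 j
          rw [Nat.sub_add_cancel h1] at this
          rw [this, hinv]
      exact (congrArg Prod.snd h2).symm
    have hdj : d j = 0 := by
      rcases hd j with h | h
      · exact h.1
      · exact absurd ⟨p, hp, rfl⟩ h.2
    exact ⟨hap, hbp, hcj, hdj⟩
  have hble : ∀ i, b i ≤ 1 := by
    intro i; rcases hb i with h | h <;> omega
  have hdle : ∀ i, d i ≤ 1 := by
    intro i; rcases hd i with h | h <;> omega
  -- card equality of the "≥ n" sets for a and c
  have cardA : ∀ n : ℕ,
      (Finset.univ.filter fun i => n ≤ a i).card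
        = (Finset.univ.filter fun i => n ≤ c i).card := by
    intro n
    refine Finset.card_nbij' (fun i => (τ ^ n) i) (fun j => (τ⁻¹ ^ n) j) ?_ ?_ ?_ ?_
    · intro i hi
      simp only [Finset.mem_coe, Finset.mem_filter, Finset.mem_univ, true_and] at hi ⊢
      refine (hC ((τ ^ n) i) n).1 ?_
      rw [hpow2]
      exact (hA i n).2 hi
    · intro j hj
      simp only [Finset.mem_coe, Finset.mem_filter, Finset.mem_univ, true_and] at hj ⊢
      exact (hA _ n).1 ((hC j n).2 hj)
    · intro i _; exact hpow2 n i
    · intro j _; exact hpow3 n j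
  -- card equality of the component-source and component-target sets
  have cardB : ∀ n : ℕ,
      (Finset.univ.filter fun i => a i = n ∧ b i = 0).card
        = (Finset.univ.filter fun j => c j = n ∧ d j = 0).card := by
    intro n
    refine Finset.card_nbij' (fun i => (τ ^ n) i) (fun j => (τ⁻¹ ^ n) j) ?_ ?_ ?_ ?_
    · intro i hi
      simp only [Finset.mem_coe, Finset.mem_filter, Finset.mem_univ, true_and] at hi ⊢
      obtain ⟨han, hbn⟩ := hi
      rcases hb i with h | h
      · obtain ⟨ℓ, hℓ⟩ := h.2
        obtain ⟨hap, _, hcj, hdj⟩ := hcomp (i, ℓ) hℓ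
        have hℓn : ℓ = n := by simpa [han] using hap.symm
        subst hℓn
        exact ⟨hcj, hdj⟩
      · omega
    · intro j hj
      simp only [Finset.mem_coe, Finset.mem_filter, Finset.mem_univ, true_and] at hj ⊢
      obtain ⟨hcn, hdn⟩ := hj
      rcases hd j with h | h
      · obtain ⟨p, hp, hpj⟩ := h.2
        obtain ⟨hap, hbp, hcj, hdj⟩ := hcomp p hp
        rw [hpj] at hcj
        have hpn : p.2 = n := by omega
        have hp1 : p.1 = (τ⁻¹ ^ n) j := by
          rw [← hpj, ← hpn, hpow2]
        rw [← hp1]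
        exact ⟨by omega, hbp⟩
      · omega
    · intro i _; exact hpow2 n i
    · intro j _; exact hpow3 n j
  -- splitting lemma
  have split : ∀ (f g : V → ℕ), (∀ i, g i ≤ 1) → ∀ n : ℕ,
      (Finset.univ.filter fun i => n ≤ f i).card
        = (Finset.univ.filter fun i => n + 1 ≤ f i + g i).card
          + (Finset.univ.filter fun i => f i = n ∧ g i = 0).card := by
    intro f g hg n
    rw [← Finset.card_union_of_disjoint]
    · congr 1
      ext i
      simp only [Finset.mem_filter, Finset.mem_union, Finset.mem_univ, true_and]
      have := hg i; omega
    · rw [Finset.disjoint_left]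
      intro i hi hi2
      simp only [Finset.mem_filter, Finset.mem_univ, true_and] at hi hi2
      omega
  -- "≥ n" counts agree for the shifted sequences
  have hge : ∀ n : ℕ,
      (Finset.univ.filter fun i => n ≤ a i + b i).card
        = (Finset.univ.filter fun i => n ≤ c i + d i).card := by
    intro n
    cases n with
    | zero => simp
    | succ m =>
        have h1 := split a b hble m
        have h2 := split c d hdle m
        have h3 := cardA m
        have h4 := cardB m
        omega
  -- equal fibre counts
  have heqsplit : ∀ (f : V → ℕ) (n : ℕ),
      (Finset.univ.filter fun i => n ≤ f i).card
        = (Finset.univ.filter fun i => f i = n).card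
          + (Finset.univ.filter fun i => n + 1 ≤ f i).card := by
    intro f n
    rw [← Finset.card_union_of_disjoint]
    · congr 1
      ext i
      simp only [Finset.mem_filter, Finset.mem_union, Finset.mem_univ, true_and]
      omega
    · rw [Finset.disjoint_left]
      intro i hi hi2
      simp only [Finset.mem_filter, Finset.mem_univ, true_and] at hi hi2
      omega
  have heq : ∀ n : ℕ,
      (Finset.univ.filter fun i => a i + b i = n).card
        = (Finset.univ.filter fun i => c i + d i = n).card := by
    intro n
    have h1 := heqsplit (fun i => a i + b i) n
    have h2 := heqsplit (fun i => c i + d i) n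
    have h3 := hge n
    have h4 := hge (n + 1)
    omega
  -- glue fibre equivalences into a permutation
  have e : ∀ n : ℕ, { i : V // c i + d i = n } ≃ { i : V // a i + b i = n } := by
    intro n
    refine Fintype.equivOfCardEq ?_
    rw [Fintype.card_subtype, Fintype.card_subtype]
    exact (heq n).symm
  exact ⟨Equiv.ofFiberEquiv e, fun i => Equiv.ofFiberEquiv_map e i⟩
end

section
/- Let p = (i, ℓ) be a path of grade g. Then: (1a) there exists a factorisable path y of grade g + 1 of which p is a proper subpath; (1b) if the source i of p is not a factorisable vertex, then this y is unique; (2a) if g > 0, there exists a factorisable path z of grade g − 1 that is a proper subpath of p; (2b) if the target i − ℓ of p is not a factorisable vertex, then this z is unique. -/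
/-!
The hypothesis on `m` says that `x` is left adjoint to `m`, so `x s ≤ t ↔ s ≤ m t` and
`t < x s ↔ m t < s`. A factorisable path from `x s` down to `x s'` has grade `s - s'`. If it
contains `p = (i, ℓ)` and starts strictly above `i`, then `s ≥ m i + 1` and `s' ≤ m (i - ℓ)`, so
its grade is at least `g + 1`, with equality only for the path from `x (m i + 1)` to
`x (m (i - ℓ))`. Dually, a factorisable subpath of `p` ending strictly above `i - ℓ` has grade at
most `g - 1`, with equality only for the path from `x (m i)` to `x (m (i - ℓ) + 1)`.
-/

/-- Paths of the quiver `ℤ` (arrows `i → i - 1`) are pairs `(source, length)`;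
`p` is a subpath of `q` iff the source of `p` is at most that of `q` and the
target of `q` is at most that of `p`. -/
def ZIsSubpath (p q : ℤ × ℕ) : Prop :=
  p.1 ≤ q.1 ∧ q.1 - (q.2 : ℤ) ≤ p.1 - (p.2 : ℤ)

/-- Proper subpath: a subpath that is not the whole path. -/
def ZIsProperSubpath (p q : ℤ × ℕ) : Prop :=
  ZIsSubpath p q ∧ p ≠ q

/-- A path is factorisable (w.r.t. the factorisable vertices, i.e. the values
of `x`) if both its source and its target are factorisable vertices. -/
def IsFactorisable (x : ℤ → ℤ) (p : ℤ × ℕ) : Prop :=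
  (∃ s : ℤ, x s = p.1) ∧ ∃ s : ℤ, x s = p.1 - (p.2 : ℤ)

/-- The grade of the path `(i, ℓ)` is `m i - m (i - ℓ)`, where
`m t = max {s : x s ≤ t}`. -/
def pathGrade (m : ℤ → ℤ) (p : ℤ × ℕ) : ℤ :=
  m p.1 - m (p.1 - (p.2 : ℤ))

/-- The path from `j` down to `k`; its length is truncated to `0` when `j < k`. -/
def pathBetween (j k : ℤ) : ℤ × ℕ := (j, (j - k).toNat)

lemma pathBetween_target {j k : ℤ} (h : k ≤ j) :
    (pathBetween j k).1 - ((pathBetween j k).2 : ℤ) = k := by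
  simp only [pathBetween]
  omega

lemma zIsSubpath_pathBetween_right_iff {p : ℤ × ℕ} {j k : ℤ} (h : k ≤ j) :
    ZIsSubpath p (pathBetween j k) ↔ p.1 ≤ j ∧ k ≤ p.1 - (p.2 : ℤ) := by
  rw [ZIsSubpath, pathBetween_target h]
  rfl

lemma zIsSubpath_pathBetween_left_iff {p : ℤ × ℕ} {j k : ℤ} (h : k ≤ j) :
    ZIsSubpath (pathBetween j k) p ↔ j ≤ p.1 ∧ p.1 - (p.2 : ℤ) ≤ k := by
  rw [ZIsSubpath, pathBetween_target h]
  rfl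

section Factorisable

variable {x m : ℤ → ℤ}

lemma isFactorisable_pathBetween (hx : Monotone x) {s s' : ℤ} (h : s' ≤ s) :
    IsFactorisable x (pathBetween (x s) (x s')) :=
  ⟨⟨s, rfl⟩, s', (pathBetween_target (hx h)).symm⟩

lemma IsFactorisable.exists_eq_pathBetween (hx : StrictMono x) {p : ℤ × ℕ}
    (hp : IsFactorisable x p) : ∃ s s', s' ≤ s ∧ p = pathBetween (x s) (x s') := by
  obtain ⟨⟨s, hs⟩, s', hs'⟩ := hp
  refine ⟨s, s', hx.le_iff_le.mp (by omega), ?_⟩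
  obtain ⟨i, ℓ⟩ := p
  simp only [pathBetween, Prod.mk.injEq] at hs hs' ⊢
  omega

lemma GaloisConnection.u_l_eq_of_strictMono (hgc : GaloisConnection x m) (hx : StrictMono x)
    (s : ℤ) : m (x s) = s :=
  le_antisymm (hx.le_iff_le.mp (hgc.l_u_le (x s))) (hgc.le_u_l s)

lemma pathGrade_pathBetween (hx : StrictMono x) (hgc : GaloisConnection x m) {s s' : ℤ}
    (h : s' ≤ s) :
    pathGrade m (pathBetween (x s) (x s')) = s - s' := by
  rw [pathGrade, pathBetween_target (hx.monotone h)]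
  simp only [pathBetween, hgc.u_l_eq_of_strictMono hx]

lemma zIsProperSubpath_pathBetween_succ (hgc : GaloisConnection x m) (p : ℤ × ℕ) :
    ZIsProperSubpath p (pathBetween (x (m p.1 + 1)) (x (m (p.1 - p.2)))) := by
  have hsrc : p.1 < x (m p.1 + 1) := hgc.lt_iff_lt.mpr (lt_add_one _)
  have htgt : x (m (p.1 - p.2)) ≤ p.1 - p.2 := hgc.l_u_le _
  refine ⟨(zIsSubpath_pathBetween_right_iff (by omega)).mpr ⟨hsrc.le, htgt⟩, ?_⟩
  exact fun h => hsrc.ne (congrArg Prod.fst h)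

lemma zIsProperSubpath_pathBetween_of_pos (hx : StrictMono x) (hgc : GaloisConnection x m)
    {p : ℤ × ℕ} (hp : 0 < pathGrade m p) :
    ZIsProperSubpath (pathBetween (x (m p.1)) (x (m (p.1 - p.2) + 1))) p := by
  have hsrc : x (m p.1) ≤ p.1 := hgc.l_u_le _
  have htgt : p.1 - p.2 < x (m (p.1 - p.2) + 1) := hgc.lt_iff_lt.mpr (lt_add_one _)
  have hle : m (p.1 - p.2) + 1 ≤ m p.1 := by rw [pathGrade] at hp; omega
  refine ⟨(zIsSubpath_pathBetween_left_iff (hx.monotone hle)).mpr ⟨hsrc, htgt.le⟩, ?_⟩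
  intro h
  have hends := congrArg (fun q : ℤ × ℕ => q.1 - (q.2 : ℤ)) h
  rw [pathBetween_target (hx.monotone hle)] at hends
  exact htgt.ne' hends

lemma eq_pathBetween_of_superpath (hx : StrictMono x) (hgc : GaloisConnection x m)
    {p y : ℤ × ℕ} (hy : IsFactorisable x y)
    (hpy : ZIsSubpath p y) (hsrc : p.1 ≠ y.1) (hgr : pathGrade m y = pathGrade m p + 1) :
    y = pathBetween (x (m p.1 + 1)) (x (m (p.1 - p.2))) := by
  obtain ⟨s, s', hs's, rfl⟩ := hy.exists_eq_pathBetween hx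
  rw [zIsSubpath_pathBetween_right_iff (hx.monotone hs's)] at hpy
  have hs : m p.1 < s := hgc.lt_iff_lt.mp (lt_of_le_of_ne hpy.1 hsrc)
  have hs' : s' ≤ m (p.1 - p.2) := hgc.le_u hpy.2
  rw [pathGrade_pathBetween hx hgc hs's, pathGrade] at hgr
  obtain ⟨rfl, rfl⟩ : s = m p.1 + 1 ∧ s' = m (p.1 - p.2) := by omega
  rfl

lemma eq_pathBetween_of_subpath (hx : StrictMono x) (hgc : GaloisConnection x m)
    {p z : ℤ × ℕ} (hz : IsFactorisable x z)
    (hzp : ZIsSubpath z p) (htgt : z.1 - (z.2 : ℤ) ≠ p.1 - p.2)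
    (hgr : pathGrade m z = pathGrade m p - 1) :
    z = pathBetween (x (m p.1)) (x (m (p.1 - p.2) + 1)) := by
  obtain ⟨s, s', hs's, rfl⟩ := hz.exists_eq_pathBetween hx
  rw [pathBetween_target (hx.monotone hs's)] at htgt
  rw [zIsSubpath_pathBetween_left_iff (hx.monotone hs's)] at hzp
  have hs : s ≤ m p.1 := hgc.le_u hzp.1
  have hs' : m (p.1 - p.2) < s' := hgc.lt_iff_lt.mp (lt_of_le_of_ne hzp.2 htgt.symm)
  rw [pathGrade_pathBetween hx hgc hs's, pathGrade] at hgr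
  obtain ⟨rfl, rfl⟩ : s = m p.1 ∧ s' = m (p.1 - p.2) + 1 := by omega
  rfl

end Factorisable

/-- **Comparison with factorisable paths.** Any path `p` of grade `g` is a
proper subpath of a factorisable path of grade `g + 1` (unique if the source
of `p` is not factorisable), and if `g > 0` it has a proper factorisable
subpath of grade `g - 1` (unique if the target of `p` is not factorisable). -/
theorem grade_comparison (x m : ℤ → ℤ) (hx : StrictMono x)
    (hm : ∀ t : ℤ, x (m t) ≤ t ∧ ∀ s : ℤ, x s ≤ t → s ≤ m t)
    (i : ℤ) (ℓ : ℕ) (g : ℤ) (hg : pathGrade m (i, ℓ) = g) :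
    (∃ y : ℤ × ℕ, IsFactorisable x y ∧ pathGrade m y = g + 1 ∧
        ZIsProperSubpath (i, ℓ) y) ∧
    ((¬ ∃ s : ℤ, x s = i) →
      ∀ y y' : ℤ × ℕ,
        (IsFactorisable x y ∧ pathGrade m y = g + 1 ∧ ZIsProperSubpath (i, ℓ) y) →
        (IsFactorisable x y' ∧ pathGrade m y' = g + 1 ∧ ZIsProperSubpath (i, ℓ) y') →
        y = y') ∧
    (0 < g →
      ∃ z : ℤ × ℕ, IsFactorisable x z ∧ pathGrade m z = g - 1 ∧
        ZIsProperSubpath z (i, ℓ)) ∧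
    ((¬ ∃ s : ℤ, x s = i - (ℓ : ℤ)) →
      ∀ z z' : ℤ × ℕ,
        (IsFactorisable x z ∧ pathGrade m z = g - 1 ∧ ZIsProperSubpath z (i, ℓ)) →
        (IsFactorisable x z' ∧ pathGrade m z' = g - 1 ∧ ZIsProperSubpath z' (i, ℓ)) →
        z = z') := by
  have hgc : GaloisConnection x m := fun s t =>
    ⟨(hm t).2 s, fun h => (hx.monotone h).trans (hm t).1⟩
  subst hg
  have hab : m ((i, ℓ).1 - ((i, ℓ).2 : ℤ)) ≤ m (i, ℓ).1 := hgc.monotone_u (by simp)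
  have hsrc {y : ℤ × ℕ} (hy : IsFactorisable x y) (hi : ¬ ∃ s, x s = i) : (i, ℓ).1 ≠ y.1 :=
    fun h => hi (hy.1.imp fun _ hs => hs.trans h.symm)
  have htgt {z : ℤ × ℕ} (hz : IsFactorisable x z) (hi : ¬ ∃ s, x s = i - ℓ) :
      z.1 - (z.2 : ℤ) ≠ (i, ℓ).1 - (i, ℓ).2 :=
    fun h => hi (hz.2.imp fun _ hs => hs.trans h)
  refine ⟨⟨_, isFactorisable_pathBetween hx.monotone (by omega), ?_,
      zIsProperSubpath_pathBetween_succ hgc (i, ℓ)⟩, ?_, fun hg => ?_, ?_⟩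
  · rw [pathGrade_pathBetween hx hgc (by omega), pathGrade]
    ring
  · rintro hi y y' ⟨hy, hgy, hiy, -⟩ ⟨hy', hgy', hiy', -⟩
    rw [eq_pathBetween_of_superpath hx hgc hy hiy (hsrc hy hi) hgy,
      eq_pathBetween_of_superpath hx hgc hy' hiy' (hsrc hy' hi) hgy']
  · have hlt : m ((i, ℓ).1 - ((i, ℓ).2 : ℤ)) + 1 ≤ m (i, ℓ).1 := by
      rw [pathGrade] at hg; omega
    refine ⟨_, isFactorisable_pathBetween hx.monotone hlt, ?_,
      zIsProperSubpath_pathBetween_of_pos hx hgc hg⟩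
    rw [pathGrade_pathBetween hx hgc hlt, pathGrade]
    ring
  · rintro hi z z' ⟨hz, hgz, hzi, -⟩ ⟨hz', hgz', hzi', -⟩
    rw [eq_pathBetween_of_subpath hx hgc hz hzi (htgt hz hi) hgz,
      eq_pathBetween_of_subpath hx hgc hz' hzi' (htgt hz' hi) hgz']
end

section
/- Every path of grade strictly less than 2 belongs to N, and no path of grade strictly greater than 2 belongs to N. -/
/-- **Grade and membership of the nonzero-path ideal.** Every path of grade
less than 2 belongs to `N`; no path of grade greater than 2 belongs to `N`. -/
theorem grade_and_residue (x m : ℤ → ℤ) (hx : StrictMono x)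
    (hm : ∀ t : ℤ, x (m t) ≤ t ∧ ∀ s : ℤ, x s ≤ t → s ≤ m t)
    (N : Set (ℤ × ℕ))
    (hN0 : ∀ i : ℤ, (i, 0) ∈ N)
    (hNdown : ∀ p q : ℤ × ℕ, ZIsSubpath p q → q ∈ N → p ∈ N)
    (hNbdd : ∃ B : ℕ, ∀ p ∈ N, p.2 ≤ B)
    (C : Set (ℤ × ℕ)) (hCN : C ⊆ N)
    (hCanti : ∀ p ∈ C, ∀ q ∈ C, ZIsSubpath p q → p = q)
    (hCmax : ∀ p ∈ C, ∀ q ∈ N, ZIsSubpath p q → p = q)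
    (hC2 : ∀ p : ℤ × ℕ, IsFactorisable x p → pathGrade m p = 2 → p ∈ C) :
    (∀ p : ℤ × ℕ, pathGrade m p < 2 → p ∈ N) ∧
      (∀ p : ℤ × ℕ, 2 < pathGrade m p → p ∉ N) := by
  have hmx : ∀ s : ℤ, m (x s) = s := by
    intro s
    have h1 := (hm (x s)).2 s le_rfl
    have h2 : m (x s) ≤ s := (hx.le_iff_le).mp (hm (x s)).1
    omega
  constructor
  · rintro ⟨i, l⟩ hp
    simp only [pathGrade] at hp
    set k := m (i - (l : ℤ)) with hk
    have hxk : x k ≤ i - (l : ℤ) := (hm _).1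
    have hik : i < x (k + 2) := by
      by_contra h
      push_neg at h
      have := (hm i).2 (k + 2) h
      omega
    have hlen : x k ≤ x (k + 2) := (hx.le_iff_le).mpr (by omega)
    set q : ℤ × ℕ := (x (k + 2), (x (k + 2) - x k).toNat) with hq
    have hq2 : (q.2 : ℤ) = x (k + 2) - x k := Int.toNat_of_nonneg (by omega)
    have hq1 : q.1 = x (k + 2) := rfl
    have htgt : q.1 - (q.2 : ℤ) = x k := by rw [hq1, hq2]; omega
    have hqC : q ∈ C := by
      apply hC2
      · exact ⟨⟨k + 2, rfl⟩, ⟨k, htgt.symm⟩⟩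
      · simp only [pathGrade, htgt, hmx]
        have h5 : m q.1 = k + 2 := by rw [hq1, hmx]
        omega
    refine hNdown _ q ⟨?_, ?_⟩ (hCN hqC)
    · exact le_of_lt hik
    · rw [htgt]; exact le_trans hxk (by omega)
  · rintro ⟨i, l⟩ hp hN
    simp only [pathGrade] at hp
    set k := m (i - (l : ℤ)) with hk
    have hxk3 : x (k + 3) ≤ i := le_trans ((hx.le_iff_le).mpr (by omega)) (hm i).1
    have hxk1 : i - (l : ℤ) < x (k + 1) := by
      by_contra h
      push_neg at h
      have := (hm (i - (l : ℤ))).2 (k + 1) h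
      omega
    have hlen : x (k + 1) ≤ x (k + 3) := (hx.le_iff_le).mpr (by omega)
    set q : ℤ × ℕ := (x (k + 3), (x (k + 3) - x (k + 1)).toNat) with hq
    have hq2 : (q.2 : ℤ) = x (k + 3) - x (k + 1) := Int.toNat_of_nonneg (by omega)
    have hq1 : q.1 = x (k + 3) := rfl
    have htgt : q.1 - (q.2 : ℤ) = x (k + 1) := by rw [hq1, hq2]; omega
    have hqC : q ∈ C := by
      apply hC2
      · exact ⟨⟨k + 3, rfl⟩, ⟨k + 1, htgt.symm⟩⟩
      · simp only [pathGrade, htgt, hmx]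
        have h5 : m q.1 = k + 3 := by rw [hq1, hmx]
        omega
    have heq : q = (i, l) := hCmax q hqC (i, l) hN ⟨hxk3, by rw [htgt]; omega⟩
    have : q.1 - (q.2 : ℤ) = i - (l : ℤ) := by rw [heq]
    omega
end

section
/- If i ∈ ℤ satisfies d_i = 1, then the path (i + c_i, c_i) — the longest member of N with target i, which is the compression of an injective syllable — has grade 2. -/
/-!
Let `x k` be the largest factorisable vertex at or below the target `i`, i.e. `k = m i`.
Every path of `N` has grade at most `2`: otherwise it would properly contain the grade-2
factorisable path from `x (k + 3)` to `x (k + 1)`, which lies in `C` and is therefore maximal in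
`N`. Conversely, as `d i = 1`, the grade-2 path from `x (k + 2)` to `x k`, which lies in `C`, does
not end at `i`, so `x k < i`; if the grade were below `2`, the longest path of `N` ending at `i`
could be extended by one arrow inside that grade-2 path, which lies in `N`.
-/

theorem GaloisConnection.u_l_eq_of_injective {α β : Type*} [PartialOrder α] [Preorder β]
    {l : β → α} {u : α → β} (gc : GaloisConnection l u) (hl : Function.Injective l) (b : β) :
    u (l b) = b :=
  hl (gc.l_u_l_eq_l b)

def factorisablePath (x : ℤ → ℤ) (k : ℤ) (g : ℕ) : ℤ × ℕ :=
  (x (k + g), (x (k + g) - x k).toNat)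

section

variable {x m : ℤ → ℤ}

theorem galoisConnection_of_isGreatest (hx : Monotone x)
    (hm : ∀ t : ℤ, x (m t) ≤ t ∧ ∀ s : ℤ, x s ≤ t → s ≤ m t) : GaloisConnection x m :=
  fun s t => ⟨(hm t).2 s, fun h => (hx h).trans (hm t).1⟩

theorem factorisablePath_target (hx : Monotone x) (k : ℤ) (g : ℕ) :
    (factorisablePath x k g).1 - ((factorisablePath x k g).2 : ℤ) = x k := by
  have : x k ≤ x (k + g) := hx (by omega)
  simp only [factorisablePath]
  omega

theorem isFactorisable_factorisablePath (hx : Monotone x) (k : ℤ) (g : ℕ) :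
    IsFactorisable x (factorisablePath x k g) :=
  ⟨⟨k + g, rfl⟩, ⟨k, (factorisablePath_target hx k g).symm⟩⟩

theorem pathGrade_factorisablePath (hx : Monotone x) (hmx : ∀ s, m (x s) = s) (k : ℤ) (g : ℕ) :
    pathGrade m (factorisablePath x k g) = g := by
  rw [pathGrade, factorisablePath_target hx, factorisablePath, hmx, hmx]
  ring

theorem pathGrade_le_two (gc : GaloisConnection x m) (hx : StrictMono x)
    {N C : Set (ℤ × ℕ)}
    (hCmax : ∀ p ∈ C, ∀ q ∈ N, ZIsSubpath p q → p = q)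
    (hC2 : ∀ p : ℤ × ℕ, IsFactorisable x p → pathGrade m p = 2 → p ∈ C)
    {p : ℤ × ℕ} (hp : p ∈ N) : pathGrade m p ≤ 2 := by
  by_contra! hgrade
  set k := m (p.1 - p.2)
  set q := factorisablePath x (k + 1) 2
  have hqC : q ∈ C := hC2 q (isFactorisable_factorisablePath hx.monotone _ _)
    (pathGrade_factorisablePath hx.monotone (gc.u_l_eq_of_injective hx.injective) _ _)
  have hq_target : q.1 - (q.2 : ℤ) = x (k + 1) := factorisablePath_target hx.monotone _ _
  have hp_target : p.1 - (p.2 : ℤ) < x (k + 1) := gc.lt_iff_lt.2 (Int.lt_succ k)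
  have hq_source : q.1 ≤ p.1 := gc.le_iff_le.2 (by rw [pathGrade] at hgrade; push_cast; omega)
  have hqp : q = p := hCmax q hqC p hp ⟨hq_source, by omega⟩
  rw [hqp] at hq_target
  omega

theorem two_le_pathGrade_of_forall_length_le (gc : GaloisConnection x m) (hx : StrictMono x)
    {N C : Set (ℤ × ℕ)}
    (hNdown : ∀ p q : ℤ × ℕ, ZIsSubpath p q → q ∈ N → p ∈ N) (hCN : C ⊆ N)
    (hC2 : ∀ p : ℤ × ℕ, IsFactorisable x p → pathGrade m p = 2 → p ∈ C)
    {i : ℤ} {ℓ : ℕ} (hℓ : ∀ ℓ' : ℕ, (i + (ℓ' : ℤ), ℓ') ∈ N → ℓ' ≤ ℓ)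
    (hi : ¬ ∃ p ∈ C, p.1 - (p.2 : ℤ) = i) : 2 ≤ pathGrade m (i + (ℓ : ℤ), ℓ) := by
  by_contra! hgrade
  set k := m i
  set q := factorisablePath x k 2
  have hqC : q ∈ C := hC2 q (isFactorisable_factorisablePath hx.monotone _ _)
    (pathGrade_factorisablePath hx.monotone (gc.u_l_eq_of_injective hx.injective) _ _)
  have hq_target : q.1 - (q.2 : ℤ) = x k := factorisablePath_target hx.monotone _ _
  have hxk : x k < i := (gc.l_u_le i).lt_of_ne fun h => hi ⟨q, hqC, hq_target.trans h⟩
  have hsource : i + (ℓ : ℤ) < q.1 :=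
    gc.lt_iff_lt.2 (by simp only [pathGrade, add_sub_cancel_right] at hgrade; push_cast; omega)
  have hext : (i + ((ℓ + 1 : ℕ) : ℤ), ℓ + 1) ∈ N :=
    hNdown _ q ⟨by push_cast; omega, by push_cast; omega⟩ (hCN hqC)
  have := hℓ (ℓ + 1) hext
  omega

end

theorem injective_syllable_compression_grade_two_general (x m : ℤ → ℤ) (hx : StrictMono x)
    (hm : ∀ t : ℤ, x (m t) ≤ t ∧ ∀ s : ℤ, x s ≤ t → s ≤ m t)
    (N : Set (ℤ × ℕ))
    (hNdown : ∀ p q : ℤ × ℕ, ZIsSubpath p q → q ∈ N → p ∈ N)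
    (C : Set (ℤ × ℕ)) (hCN : C ⊆ N)
    (hCmax : ∀ p ∈ C, ∀ q ∈ N, ZIsSubpath p q → p = q)
    (hC2 : ∀ p : ℤ × ℕ, IsFactorisable x p → pathGrade m p = 2 → p ∈ C)
    (c d : ℤ → ℕ)
    (hc : ∀ i : ℤ, (i + (c i : ℤ), c i) ∈ N ∧ ∀ ℓ : ℕ, (i + (ℓ : ℤ), ℓ) ∈ N → ℓ ≤ c i)
    (hd : ∀ i : ℤ, (d i = 0 ∧ ∃ p ∈ C, p.1 - (p.2 : ℤ) = i) ∨
      (d i = 1 ∧ ¬ ∃ p ∈ C, p.1 - (p.2 : ℤ) = i)) :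
    ∀ i : ℤ, d i = 1 → pathGrade m (i + (c i : ℤ), c i) = 2 := by
  intro i hdi
  have gc : GaloisConnection x m := galoisConnection_of_isGreatest hx.monotone hm
  have hi : ¬ ∃ p ∈ C, p.1 - (p.2 : ℤ) = i := by
    rcases hd i with ⟨hd0, -⟩ | ⟨-, hi⟩
    · omega
    · exact hi
  exact le_antisymm (pathGrade_le_two gc hx hCmax hC2 (hc i).1)
    (two_le_pathGrade_of_forall_length_le gc hx hNdown hCN hC2 (hc i).2 hi)

/-- **Compressions of injective syllables have grade 2.** If `d i = 1`, then
the longest member of `N` with target `i`, namely the path `(i + c i, c i)`,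
has grade 2. -/
theorem injective_syllable_compression_grade_two (x m : ℤ → ℤ) (hx : StrictMono x)
    (hm : ∀ t : ℤ, x (m t) ≤ t ∧ ∀ s : ℤ, x s ≤ t → s ≤ m t)
    (N : Set (ℤ × ℕ))
    (hN0 : ∀ i : ℤ, (i, 0) ∈ N)
    (hNdown : ∀ p q : ℤ × ℕ, ZIsSubpath p q → q ∈ N → p ∈ N)
    (hNbdd : ∃ B : ℕ, ∀ p ∈ N, p.2 ≤ B)
    (C : Set (ℤ × ℕ)) (hCN : C ⊆ N)
    (hCanti : ∀ p ∈ C, ∀ q ∈ C, ZIsSubpath p q → p = q)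
    (hCmax : ∀ p ∈ C, ∀ q ∈ N, ZIsSubpath p q → p = q)
    (hC2 : ∀ p : ℤ × ℕ, IsFactorisable x p → pathGrade m p = 2 → p ∈ C)
    (c d : ℤ → ℕ)
    (hc : ∀ i : ℤ, (i + (c i : ℤ), c i) ∈ N ∧ ∀ ℓ : ℕ, (i + (ℓ : ℤ), ℓ) ∈ N → ℓ ≤ c i)
    (hd : ∀ i : ℤ, (d i = 0 ∧ ∃ p ∈ C, p.1 - (p.2 : ℤ) = i) ∨
      (d i = 1 ∧ ¬ ∃ p ∈ C, p.1 - (p.2 : ℤ) = i)) :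
    ∀ i : ℤ, d i = 1 → pathGrade m (i + (c i : ℤ), c i) = 2 :=
  injective_syllable_compression_grade_two_general x m hx hm N hNdown C hCN hCmax hC2 c d hc hd
end
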